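/- arXiv:1706.05689 — 7 statements merged into one kernel-verified Lean document; each statement's English description precedes it below -/
import Mathlib

section
/- Under the standard Solow–Swan hypotheses, every positive initial condition converges to the interior equilibrium: if x : ℝ → ℝ satisfies x(0) = x₀ > 0 and x'(t) = F(x(t)) − C·x(t) for all t ≥ 0, then x(t) → E as t → ∞. -/
/-!
Write `v z = F z - C z`, so that `x' = v ∘ x`. A level `c` with `v c < 0` cannot be crossed
upwards and a level with `v c > 0` cannot be crossed downwards; since `v` is positive on `(0, E)`
and negative above `E`, this traps `x` between `x₀` and `E`, where `v` has constant sign.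
So `x` is monotone and bounded and converges, and its limit is a zero of `v` (otherwise `x'` would
tend to a nonzero value). The only zero of `v` between `x₀` and `E` is `E`.
-/

open Set Filter Topology

theorem MonotoneOn.tendsto_atTop_csSup {α β : Type*} [Preorder α] [IsDirectedOrder α]
    [ConditionallyCompleteLinearOrder β] [TopologicalSpace β] [OrderTopology β]
    {f : α → β} {a : α} (hf : MonotoneOn f (Ici a)) (hbdd : BddAbove (f '' Ici a)) :
    Tendsto f atTop (𝓝 (sSup (f '' Ici a))) := by
  rw [← tendsto_comp_val_Ici_atTop (a := a)]
  refine tendsto_atTop_isLUB (fun s t hst => hf s.2 t.2 hst) ?_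
  rw [← image_eq_range]
  exact isLUB_csSup (nonempty_Ici.image f) hbdd

theorem eq_zero_of_tendsto_of_tendsto_deriv {f f' : ℝ → ℝ} {L l : ℝ}
    (hf : ∀ᶠ t in atTop, HasDerivAt f (f' t) t) (hfL : Tendsto f atTop (𝓝 L))
    (hf'l : Tendsto f' atTop (𝓝 l)) : l = 0 := by
  obtain ⟨T, hT⟩ := eventually_atTop.1 hf
  -- Each increment `f (s + 1) - f s`, which tends to `0`, is a value of `f'` beyond `s`.
  have hslope : ∀ t, ∃ ξ, max t T < ξ ∧ f' ξ = f (max t T + 1) - f (max t T) := by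
    intro t
    have hderiv : ∀ s ∈ Icc (max t T) (max t T + 1), HasDerivAt f (f' s) s :=
      fun s hs => hT s ((le_max_right t T).trans hs.1)
    obtain ⟨ξ, hξ, hξeq⟩ := exists_hasDerivAt_eq_slope f f' (lt_add_one (max t T))
      (fun s hs => (hderiv s hs).continuousAt.continuousWithinAt)
      (fun s hs => hderiv s (Ioo_subset_Icc_self hs))
    exact ⟨ξ, hξ.1, by rw [hξeq, add_sub_cancel_left, div_one]⟩
  choose ξ hξ hξeq using hslope
  have hmax : Tendsto (fun t => max t T) atTop atTop :=
    tendsto_atTop_mono (le_max_left · T) tendsto_id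
  have h0 : Tendsto (fun t => f' (ξ t)) atTop (𝓝 0) := by
    simp only [hξeq]
    simpa using (hfL.comp (tendsto_atTop_add_const_right _ 1 hmax)).sub (hfL.comp hmax)
  exact tendsto_nhds_unique (hf'l.comp (tendsto_atTop_mono (fun t => (hξ t).le) hmax)) h0

section AutonomousODE

variable {v x : ℝ → ℝ}

theorem solution_le_of_neg (hx : ∀ t, 0 ≤ t → HasDerivAt x (v (x t)) t) {c : ℝ}
    (hc : v c < 0) (h0 : x 0 ≤ c) {t : ℝ} (ht : 0 ≤ t) : x t ≤ c :=
  image_le_of_deriv_right_lt_deriv_boundary' (f' := fun s => v (x s)) (B' := fun _ => 0)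
    (fun s hs => (hx s hs.1).continuousAt.continuousWithinAt)
    (fun s hs => (hx s hs.1).hasDerivWithinAt) h0 continuousOn_const
    (fun s _ => hasDerivWithinAt_const s _ c) (fun _ _ hs => hs ▸ hc) ⟨ht, le_rfl⟩

theorem le_solution_of_pos (hx : ∀ t, 0 ≤ t → HasDerivAt x (v (x t)) t) {c : ℝ}
    (hc : 0 < v c) (h0 : c ≤ x 0) {t : ℝ} (ht : 0 ≤ t) : c ≤ x t :=
  image_le_of_deriv_right_lt_deriv_boundary' (f' := fun _ => 0) (B' := fun s => v (x s))
    continuousOn_const (fun s _ => hasDerivWithinAt_const s _ c) h0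
    (fun s hs => (hx s hs.1).continuousAt.continuousWithinAt)
    (fun s hs => (hx s hs.1).hasDerivWithinAt) (fun _ _ hs => hs ▸ hc) ⟨ht, le_rfl⟩

theorem solution_le_of_eventually_neg (hx : ∀ t, 0 ≤ t → HasDerivAt x (v (x t)) t) {b : ℝ}
    (hb : ∀ᶠ c in 𝓝[>] b, v c < 0) (h0 : x 0 ≤ b) {t : ℝ} (ht : 0 ≤ t) : x t ≤ b :=
  ge_of_tendsto (tendsto_nhdsWithin_of_tendsto_nhds tendsto_id) <|
    hb.mp <| eventually_nhdsWithin_of_forall fun _ hbc hc =>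
      solution_le_of_neg hx hc (h0.trans (le_of_lt hbc)) ht

theorem le_solution_of_eventually_pos (hx : ∀ t, 0 ≤ t → HasDerivAt x (v (x t)) t) {a : ℝ}
    (ha : ∀ᶠ c in 𝓝[<] a, 0 < v c) (h0 : a ≤ x 0) {t : ℝ} (ht : 0 ≤ t) : a ≤ x t :=
  le_of_tendsto (tendsto_nhdsWithin_of_tendsto_nhds tendsto_id) <|
    ha.mp <| eventually_nhdsWithin_of_forall fun _ hca hc =>
      le_solution_of_pos hx hc ((le_of_lt hca).trans h0) ht

theorem tendsto_of_mem_Icc_of_pos (hv : Continuous v)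
    (hx : ∀ t, 0 ≤ t → HasDerivAt x (v (x t)) t) {a b : ℝ}
    (hmem : ∀ t, 0 ≤ t → x t ∈ Icc a b) (hpos : ∀ z ∈ Ico a b, 0 < v z) (hb : v b = 0) :
    Tendsto x atTop (𝓝 b) := by
  have hnonneg : ∀ z ∈ Icc a b, 0 ≤ v z := fun z hz =>
    hz.2.eq_or_lt.elim (fun h => (h ▸ hb).ge) fun h => (hpos z ⟨hz.1, h⟩).le
  have hmono : MonotoneOn x (Ici 0) := monotoneOn_of_hasDerivWithinAt_nonneg (convex_Ici 0)
    (fun t ht => (hx t ht).continuousAt.continuousWithinAt)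
    (fun t ht => (hx t (interior_subset ht)).hasDerivWithinAt)
    (fun t ht => hnonneg _ (hmem t (interior_subset ht)))
  have hbdd : BddAbove (x '' Ici 0) := ⟨b, forall_mem_image.2 fun t ht => (hmem t ht).2⟩
  set L := sSup (x '' Ici 0)
  have hL : Tendsto x atTop (𝓝 L) := hmono.tendsto_atTop_csSup hbdd
  have hLmem : L ∈ Icc a b := isClosed_Icc.mem_of_tendsto hL (eventually_atTop.2 ⟨0, hmem⟩)
  have hvL : v L = 0 :=
    eq_zero_of_tendsto_of_tendsto_deriv (eventually_atTop.2 ⟨0, hx⟩) hL ((hv.tendsto L).comp hL)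
  obtain rfl : L = b := by
    by_contra hne
    exact (hpos L ⟨hLmem.1, lt_of_le_of_ne hLmem.2 hne⟩).ne' hvL
  exact hL

theorem tendsto_of_mem_Icc_of_neg (hv : Continuous v)
    (hx : ∀ t, 0 ≤ t → HasDerivAt x (v (x t)) t) {a b : ℝ}
    (hmem : ∀ t, 0 ≤ t → x t ∈ Icc a b) (hneg : ∀ z ∈ Ioc a b, v z < 0) (ha : v a = 0) :
    Tendsto x atTop (𝓝 a) := by
  have h := tendsto_of_mem_Icc_of_pos (v := fun z => -v (-z)) (x := fun t => -x t) (a := -b)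
    (by fun_prop) (fun t ht => by simpa only [neg_neg] using (hx t ht).fun_neg)
    (fun t ht => ⟨neg_le_neg (hmem t ht).2, neg_le_neg (hmem t ht).1⟩)
    (fun z hz => neg_pos.2 (hneg (-z) ⟨lt_neg.1 hz.2, neg_le.1 hz.1⟩)) (by simp [ha])
  simpa using h.neg

end AutonomousODE

theorem solow_swan_global_convergence_general
    (F : ℝ → ℝ) (C E : ℝ)
    (hF : LocallyLipschitz F)
    (hE : 0 < E) (hEeq : F E = C * E)
    (hlt : ∀ z ∈ Set.Ioo (0 : ℝ) E, C * z < F z)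
    (hgt : ∀ z : ℝ, E < z → F z < C * z)
    (x : ℝ → ℝ) (x₀ : ℝ) (hx₀ : 0 < x₀) (hinit : x 0 = x₀)
    (hode : ∀ t : ℝ, 0 ≤ t → HasDerivAt x (F (x t) - C * x t) t) :
    Filter.Tendsto x Filter.atTop (nhds E) := by
  set v : ℝ → ℝ := fun z => F z - C * z
  have hv : Continuous v := hF.continuous.sub (continuous_const_mul C)
  have hvE : v E = 0 := sub_eq_zero.2 hEeq
  have hpos : ∀ z ∈ Ioo 0 E, 0 < v z := fun z hz => sub_pos.2 (hlt z hz)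
  have hneg : ∀ z, E < z → v z < 0 := fun z hz => sub_neg.2 (hgt z hz)
  have hbelow : ∀ {a}, 0 < a → a ≤ E → ∀ᶠ c in 𝓝[<] a, 0 < v c := fun ha haE =>
    mem_of_superset (Ioo_mem_nhdsLT ha) fun c hc => hpos c ⟨hc.1, hc.2.trans_le haE⟩
  have habove : ∀ {b}, E ≤ b → ∀ᶠ c in 𝓝[>] b, v c < 0 := fun hb =>
    eventually_nhdsWithin_of_forall fun c hc => hneg c (hb.trans_lt hc)
  rcases le_total x₀ E with h | h
  · refine tendsto_of_mem_Icc_of_pos hv hode (a := x₀) (fun t ht => ⟨?_, ?_⟩)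
      (fun z hz => hpos z ⟨hx₀.trans_le hz.1, hz.2⟩) hvE
    · exact le_solution_of_eventually_pos hode (hbelow hx₀ h) hinit.ge ht
    · exact solution_le_of_eventually_neg hode (habove le_rfl) (hinit.trans_le h) ht
  · refine tendsto_of_mem_Icc_of_neg hv hode (b := x₀) (fun t ht => ⟨?_, ?_⟩)
      (fun z hz => hneg z hz.1) hvE
    · exact le_solution_of_eventually_pos hode (hbelow hE le_rfl) (h.trans hinit.ge) ht
    · exact solution_le_of_eventually_neg hode (habove h) hinit.le ht

/-- Under the standard Solow–Swan hypotheses, every positive initial condition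
converges to the interior equilibrium. -/
theorem solow_swan_global_convergence
    (F : ℝ → ℝ) (C E : ℝ) (hC : 0 < C)
    (hF : LocallyLipschitz F)
    (hE : 0 < E) (hEeq : F E = C * E)
    (hlt : ∀ z ∈ Set.Ioo (0 : ℝ) E, C * z < F z)
    (hgt : ∀ z : ℝ, E < z → F z < C * z)
    (x : ℝ → ℝ) (x₀ : ℝ) (hx₀ : 0 < x₀) (hinit : x 0 = x₀)
    (hode : ∀ t : ℝ, 0 ≤ t → HasDerivAt x (F (x t) - C * x t) t) :
    Filter.Tendsto x Filter.atTop (nhds E) :=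
  solow_swan_global_convergence_general F C E hF hE hEeq hlt hgt x x₀ hx₀ hinit hode
end

section
/- Under the standard Solow–Swan hypotheses, solutions approach the equilibrium monotonically: if x is a solution with initial condition x₀ and 0 < x₀ < E, then x is nondecreasing on [0,∞) and x₀ ≤ x(t) < E for all t ≥ 0; if x₀ > E, then x is nonincreasing on [0,∞) and E < x(t) ≤ x₀ for all t ≥ 0. -/
/-!
Both halves rest on two barriers for the autonomous equation `x' = v x`, `v z = F z - C z`.
Since `v` is locally Lipschitz and `v E = 0`, local uniqueness shows that `{t ≥ 0 | x t = E}` is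
open as well as closed, hence empty when `x 0 ≠ E`: the solution never reaches the equilibrium,
so it stays on the side of `E` it starts on. Since `v x₀ ≠ 0`, a strict comparison with the
constant `x₀` shows that it never crosses back over its initial value either. The solution is
thus confined to the interval between `x₀` and `E`, where `v` has constant sign, and `x` is
monotone.
-/

open Set Topology

def IsForwardSolution {E : Type*} [NormedAddCommGroup E] [NormedSpace ℝ E] (v : E → E)
    (x : ℝ → E) : Prop :=
  ∀ t, 0 ≤ t → HasDerivAt x (v (x t)) t

namespace IsForwardSolution

section NormedSpace

variable {E : Type*} [NormedAddCommGroup E] [NormedSpace ℝ E] {v : E → E} {x : ℝ → E}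

theorem continuousOn (hx : IsForwardSolution v x) : ContinuousOn x (Ici 0) :=
  fun t ht => (hx t ht).continuousAt.continuousWithinAt

theorem apply_ne_of_apply_zero_ne (hx : IsForwardSolution v x) (hv : LocallyLipschitz v)
    {e : E} (he : v e = 0) (h0 : x 0 ≠ e) {t : ℝ} (ht : 0 ≤ t) : x t ≠ e := by
  set A := Ici 0 ∩ x ⁻¹' {e}
  have hA_closed : IsClosed A :=
    hx.continuousOn.preimage_isClosed_of_isClosed isClosed_Ici isClosed_singleton
  have hA_open : IsOpen A := by
    refine isOpen_iff_mem_nhds.2 fun τ ⟨hτ, hxτ⟩ => ?_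
    have hτ0 : 0 < τ := lt_of_le_of_ne hτ fun h => h0 (h ▸ hxτ)
    obtain ⟨K, s, hs, hK⟩ := hv e
    have hx_near : ∀ᶠ σ in 𝓝 τ, HasDerivAt x (v (x σ)) σ ∧ x σ ∈ s := by
      filter_upwards [Ioi_mem_nhds hτ0, (hx τ hτ).continuousAt.preimage_mem_nhds
        ((mem_singleton_iff.1 hxτ).symm ▸ hs)] with σ hσ hσs
      exact ⟨hx σ (mem_Ioi.1 hσ).le, hσs⟩
    have hconst_near : ∀ᶠ σ in 𝓝 τ, HasDerivAt (fun _ => e) (v e) σ ∧ e ∈ s :=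
      .of_forall fun σ => ⟨he ▸ hasDerivAt_const σ e, mem_of_mem_nhds hs⟩
    have hx_eq := ODE_solution_unique_of_eventually (v := fun _ => v) (s := fun _ => s)
      (.of_forall fun _ => hK) hx_near hconst_near hxτ
    filter_upwards [hx_eq, Ioi_mem_nhds hτ0] with σ hσ hσ0
    exact ⟨(mem_Ioi.1 hσ0).le, hσ⟩
  have hA_empty : A = ∅ := (isClopen_iff.1 ⟨hA_closed, hA_open⟩).resolve_right
    fun hA => h0 (hA ▸ mem_univ 0 : (0 : ℝ) ∈ A).2
  exact fun hxt => hA_empty.subset (⟨ht, hxt⟩ : t ∈ A)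

end NormedSpace

section Real

variable {v x : ℝ → ℝ} {t : ℝ}

theorem apply_lt_of_apply_zero_lt (hx : IsForwardSolution v x) (hv : LocallyLipschitz v)
    {e : ℝ} (he : v e = 0) (h0 : x 0 < e) (ht : 0 ≤ t) : x t < e := by
  by_contra! h
  obtain ⟨τ, hτ, hxτ⟩ := isPreconnected_Ici.intermediate_value self_mem_Ici ht hx.continuousOn
    ⟨h0.le, h⟩
  exact hx.apply_ne_of_apply_zero_ne hv he h0.ne hτ hxτ

theorem lt_apply_of_lt_apply_zero (hx : IsForwardSolution v x) (hv : LocallyLipschitz v)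
    {e : ℝ} (he : v e = 0) (h0 : e < x 0) (ht : 0 ≤ t) : e < x t := by
  by_contra! h
  obtain ⟨τ, hτ, hxτ⟩ := isPreconnected_Ici.intermediate_value ht self_mem_Ici hx.continuousOn
    ⟨h, h0.le⟩
  exact hx.apply_ne_of_apply_zero_ne hv he h0.ne' hτ hxτ

theorem apply_zero_le_of_pos (hx : IsForwardSolution v x) (h0 : 0 < v (x 0)) (ht : 0 ≤ t) :
    x 0 ≤ x t :=
  image_le_of_deriv_right_lt_deriv_boundary' (f := fun _ => x 0) (B := x) (a := 0) (b := t)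
    continuousOn_const (fun _ _ => hasDerivWithinAt_const _ _ _) le_rfl
    (hx.continuousOn.mono Icc_subset_Ici_self)
    (fun τ hτ => (hx τ hτ.1).hasDerivWithinAt) (fun _ _ hxτ => hxτ ▸ h0) ⟨ht, le_rfl⟩

theorem apply_le_apply_zero_of_neg (hx : IsForwardSolution v x) (h0 : v (x 0) < 0)
    (ht : 0 ≤ t) : x t ≤ x 0 :=
  image_le_of_deriv_right_lt_deriv_boundary' (f := x) (B := fun _ => x 0) (a := 0) (b := t)
    (hx.continuousOn.mono Icc_subset_Ici_self)
    (fun τ hτ => (hx τ hτ.1).hasDerivWithinAt) le_rfl continuousOn_const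
    (fun _ _ => hasDerivWithinAt_const _ _ _) (fun _ _ hxτ => hxτ ▸ h0) ⟨ht, le_rfl⟩

theorem monotoneOn (hx : IsForwardSolution v x) (hv : ∀ t, 0 ≤ t → 0 ≤ v (x t)) :
    MonotoneOn x (Ici 0) :=
  monotoneOn_of_hasDerivWithinAt_nonneg (convex_Ici 0) hx.continuousOn
    (fun τ hτ => (hx τ (interior_subset hτ)).hasDerivWithinAt)
    (fun τ hτ => hv τ (interior_subset hτ))

theorem antitoneOn (hx : IsForwardSolution v x) (hv : ∀ t, 0 ≤ t → v (x t) ≤ 0) :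
    AntitoneOn x (Ici 0) :=
  antitoneOn_of_hasDerivWithinAt_nonpos (convex_Ici 0) hx.continuousOn
    (fun τ hτ => (hx τ (interior_subset hτ)).hasDerivWithinAt)
    (fun τ hτ => hv τ (interior_subset hτ))

end Real

end IsForwardSolution

theorem solow_swan_monotone_approach_general
    (F : ℝ → ℝ) (C E : ℝ)
    (hF : LocallyLipschitz F)
    (hEeq : F E = C * E)
    (hlt : ∀ z ∈ Set.Ioo (0 : ℝ) E, C * z < F z)
    (hgt : ∀ z : ℝ, E < z → F z < C * z)
    (x : ℝ → ℝ) (x₀ : ℝ) (hinit : x 0 = x₀)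
    (hode : ∀ t : ℝ, 0 ≤ t → HasDerivAt x (F (x t) - C * x t) t) :
    (0 < x₀ → x₀ < E →
      MonotoneOn x (Set.Ici (0 : ℝ)) ∧ ∀ t : ℝ, 0 ≤ t → x₀ ≤ x t ∧ x t < E) ∧
    (E < x₀ →
      AntitoneOn x (Set.Ici (0 : ℝ)) ∧ ∀ t : ℝ, 0 ≤ t → E < x t ∧ x t ≤ x₀) := by
  have hx : IsForwardSolution (fun z => F z - C * z) x := hode
  have hv : LocallyLipschitz fun z => F z - C * z :=
    hF.sub ((contDiff_const.mul contDiff_id).locallyLipschitz (𝕂 := ℝ))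
  have he : F E - C * E = 0 := sub_eq_zero.2 hEeq
  subst hinit
  refine ⟨fun h0 h0E => ?_, fun hE0 => ?_⟩
  · have hbounds : ∀ t, 0 ≤ t → x 0 ≤ x t ∧ x t < E := fun t ht =>
      ⟨hx.apply_zero_le_of_pos (sub_pos.2 (hlt _ ⟨h0, h0E⟩)) ht,
        hx.apply_lt_of_apply_zero_lt hv he h0E ht⟩
    refine ⟨hx.monotoneOn fun t ht => ?_, hbounds⟩
    exact (sub_pos.2 (hlt _ ⟨h0.trans_le (hbounds t ht).1, (hbounds t ht).2⟩)).le
  · have hbounds : ∀ t, 0 ≤ t → E < x t ∧ x t ≤ x 0 := fun t ht =>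
      ⟨hx.lt_apply_of_lt_apply_zero hv he hE0 ht,
        hx.apply_le_apply_zero_of_neg (sub_neg.2 (hgt _ hE0)) ht⟩
    exact ⟨hx.antitoneOn fun t ht => (sub_neg.2 (hgt _ (hbounds t ht).1)).le, hbounds⟩

/-- Under the standard Solow–Swan hypotheses, solutions approach the
equilibrium monotonically. -/
theorem solow_swan_monotone_approach
    (F : ℝ → ℝ) (C E : ℝ) (hC : 0 < C)
    (hF : LocallyLipschitz F)
    (hE : 0 < E) (hEeq : F E = C * E)
    (hlt : ∀ z ∈ Set.Ioo (0 : ℝ) E, C * z < F z)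
    (hgt : ∀ z : ℝ, E < z → F z < C * z)
    (x : ℝ → ℝ) (x₀ : ℝ) (hinit : x 0 = x₀)
    (hode : ∀ t : ℝ, 0 ≤ t → HasDerivAt x (F (x t) - C * x t) t) :
    (0 < x₀ → x₀ < E →
      MonotoneOn x (Set.Ici (0 : ℝ)) ∧ ∀ t : ℝ, 0 ≤ t → x₀ ≤ x t ∧ x t < E) ∧
    (E < x₀ →
      AntitoneOn x (Set.Ici (0 : ℝ)) ∧ ∀ t : ℝ, 0 ≤ t → E < x t ∧ x t ≤ x₀) :=
  solow_swan_monotone_approach_general F C E hF hEeq hlt hgt x x₀ hinit hode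
end

section
/- Under the standard Solow–Swan hypotheses with F(0) = 0, the origin is an unstable equilibrium: for every x₀ ∈ (0,E) and every threshold y ∈ (0,E), any solution x with x(0) = x₀ satisfies x(t) > y for some t ≥ 0; in particular, for every δ > 0 there are initial conditions in (0,δ) whose solutions leave the interval (0, E/2). -/
open Set Filter Topology

/-- If a function has positive derivative at `s`, it takes larger values at some
point in `(s, T)` for any `T > s`. -/
lemma exists_gt_of_hasDerivAt_pos {x : ℝ → ℝ} {s T d : ℝ}
    (hd : HasDerivAt x d s) (hd0 : 0 < d) (hsT : s < T) :
    ∃ t ∈ Set.Ioo s T, x s < x t := by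
  have h := hasDerivAt_iff_tendsto_slope.mp hd
  have h2 : ∀ᶠ t in 𝓝[≠] s, 0 < slope x s t := h.eventually (eventually_gt_nhds hd0)
  have hle : 𝓝[>] s ≤ 𝓝[≠] s :=
    nhdsWithin_mono s (fun t ht => ne_of_gt ht)
  have h3 : ∀ᶠ t in 𝓝[>] s, 0 < slope x s t := hle h2
  have h4 : Set.Ioo s T ∈ 𝓝[>] s := Ioo_mem_nhdsGT_of_mem ⟨le_refl s, hsT⟩
  obtain ⟨t, ht, htIoo⟩ := (h3.and (eventually_of_mem h4 (fun t ht => ht))).exists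
  refine ⟨t, htIoo, ?_⟩
  rw [slope_def_field] at ht
  have hts : 0 < t - s := sub_pos.mpr htIoo.1
  by_contra hxc
  push_neg at hxc
  have : (x t - x s) / (t - s) ≤ 0 := div_nonpos_of_nonpos_of_nonneg (by linarith) (le_of_lt hts)
  linarith

/-- Under the standard Solow–Swan hypotheses with `F 0 = 0`, the origin is an
unstable equilibrium: every solution starting in `(0, E)` eventually exceeds any
threshold `y ∈ (0, E)`; in particular, for every `δ > 0` there are initial
conditions in `(0, δ)` whose solutions leave the interval `(0, E/2)`. -/
theorem solow_swan_origin_unstable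
    (F : ℝ → ℝ) (C E : ℝ) (hC : 0 < C)
    (hF : LocallyLipschitz F) (hF0 : F 0 = 0)
    (hE : 0 < E) (hEeq : F E = C * E)
    (hlt : ∀ z ∈ Set.Ioo (0 : ℝ) E, C * z < F z)
    (hgt : ∀ z : ℝ, E < z → F z < C * z) :
    (∀ x₀ ∈ Set.Ioo (0 : ℝ) E, ∀ y ∈ Set.Ioo (0 : ℝ) E,
      ∀ x : ℝ → ℝ, x 0 = x₀ →
        (∀ t : ℝ, 0 ≤ t → HasDerivAt x (F (x t) - C * x t) t) →
        ∃ t : ℝ, 0 ≤ t ∧ y < x t) ∧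
    (∀ δ : ℝ, 0 < δ → ∃ x₀ ∈ Set.Ioo (0 : ℝ) δ,
      ∀ x : ℝ → ℝ, x 0 = x₀ →
        (∀ t : ℝ, 0 ≤ t → HasDerivAt x (F (x t) - C * x t) t) →
        ∃ t : ℝ, 0 ≤ t ∧ x t ∉ Set.Ioo (0 : ℝ) (E / 2)) := by
  have hgcont : Continuous (fun z => F z - C * z) :=
    hF.continuous.sub (continuous_const.mul continuous_id)
  have main : ∀ x₀ ∈ Set.Ioo (0 : ℝ) E, ∀ y ∈ Set.Ioo (0 : ℝ) E,
      ∀ x : ℝ → ℝ, x 0 = x₀ →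
        (∀ t : ℝ, 0 ≤ t → HasDerivAt x (F (x t) - C * x t) t) →
        ∃ t : ℝ, 0 ≤ t ∧ y < x t := by
    intro x₀ hx₀ y hy x hx0 hx
    -- Step 1: the solution never drops below x₀.
    have nodrop : ∀ t : ℝ, 0 ≤ t → x₀ ≤ x t := by
      by_contra hcon
      push_neg at hcon
      obtain ⟨T, hT0, hTlt⟩ := hcon
      have hxcont : ContinuousOn x (Set.Icc 0 T) := fun t ht =>
        (hx t ht.1).continuousAt.continuousWithinAt
      set A : Set ℝ := Set.Icc 0 T ∩ x ⁻¹' Set.Ici x₀ with hA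
      have hAclosed : IsClosed A :=
        hxcont.preimage_isClosed_of_isClosed isClosed_Icc isClosed_Ici
      have h0A : (0 : ℝ) ∈ A := by
        constructor
        · exact ⟨le_refl 0, hT0⟩
        · simp [hx0]
      have hAne : A.Nonempty := ⟨0, h0A⟩
      have hAbdd : BddAbove A := ⟨T, fun t ht => ht.1.2⟩
      set s := sSup A with hs
      have hsA : s ∈ A := hAclosed.csSup_mem hAne hAbdd
      have hs0 : 0 ≤ s := hsA.1.1
      have hsT : s ≤ T := hsA.1.2
      have hxs_ge : x₀ ≤ x s := hsA.2
      have hsneT : s ≠ T := by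
        intro h; rw [h] at hxs_ge; linarith
      have hsltT : s < T := lt_of_le_of_ne hsT hsneT
      -- everything strictly after s (up to T) is below x₀
      have hafter : ∀ t ∈ Set.Ioo s T, x t < x₀ := by
        intro t ht
        by_contra hge
        push_neg at hge
        have : t ∈ A := ⟨⟨le_trans hs0 (le_of_lt ht.1), le_of_lt ht.2⟩, hge⟩
        have := le_csSup hAbdd this
        linarith [ht.1]
      -- by continuity from the right, x s ≤ x₀
      have hxs_le : x s ≤ x₀ := by
        have htend : Tendsto x (𝓝[>] s) (𝓝 (x s)) :=
          ((hx s hs0).continuousAt.tendsto).comp (nhdsWithin_le_nhds)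
        refine le_of_tendsto htend ?_
        filter_upwards [Ioo_mem_nhdsGT_of_mem (⟨le_refl s, hsltT⟩ : s ∈ Set.Ico s T)]
          with t ht using le_of_lt (hafter t ht)
      have hxs : x s = x₀ := le_antisymm hxs_le hxs_ge
      have hpos : 0 < F (x s) - C * x s := by
        rw [hxs]; linarith [hlt x₀ hx₀]
      obtain ⟨t, htIoo, hgt'⟩ := exists_gt_of_hasDerivAt_pos (hx s hs0) hpos hsltT
      have := hafter t htIoo
      rw [hxs] at hgt'
      linarith
    rcases lt_or_ge y x₀ with h | h
    · exact ⟨0, le_refl 0, by rw [hx0]; exact h⟩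
    by_contra hcon
    push_neg at hcon
    -- so x t ∈ [x₀, y] for all t ≥ 0
    have hmem : ∀ t : ℝ, 0 ≤ t → x t ∈ Set.Icc x₀ y := fun t ht =>
      ⟨nodrop t ht, hcon t ht⟩
    -- minimum of the (positive) vector field on [x₀, y]
    obtain ⟨z, hz, hzmin⟩ := isCompact_Icc.exists_isMinOn (Set.nonempty_Icc.mpr h)
      (hgcont.continuousOn (s := Set.Icc x₀ y))
    set m := F z - C * z with hm
    have hzIoo : z ∈ Set.Ioo (0 : ℝ) E :=
      ⟨lt_of_lt_of_le hx₀.1 hz.1, lt_of_le_of_lt hz.2 hy.2⟩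
    have hm0 : 0 < m := by have := hlt z hzIoo; linarith
    -- growth estimate via monotonicity of t ↦ x t - m * t
    set T := (y - x₀ + 1) / m with hT
    have hT0 : 0 < T := div_pos (by linarith) hm0
    have hmono : MonotoneOn (fun t => x t - m * t) (Set.Icc 0 T) := by
      apply monotoneOn_of_deriv_nonneg (convex_Icc 0 T)
      · exact fun t ht => ((hx t ht.1).sub ((hasDerivAt_id t).const_mul m)).continuousAt.continuousWithinAt
      · intro t ht
        rw [interior_Icc] at ht
        exact (((hx t (le_of_lt ht.1)).sub ((hasDerivAt_id t).const_mul m)).differentiableAt).differentiableWithinAt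
      · intro t ht
        rw [interior_Icc] at ht
        have hd : HasDerivAt (fun t => x t - m * t) (F (x t) - C * x t - m * 1) t :=
          (hx t (le_of_lt ht.1)).sub ((hasDerivAt_id t).const_mul m)
        rw [hd.deriv]
        have h2 : F z - C * z ≤ F (x t) - C * x t := hzmin (hmem t (le_of_lt ht.1))
        simp only [hm]
        linarith
    have hkey := hmono (Set.left_mem_Icc.mpr (le_of_lt hT0))
      (Set.right_mem_Icc.mpr (le_of_lt hT0)) (le_of_lt hT0)
    simp only [mul_zero, sub_zero, hx0] at hkey
    have hmT : m * T = y - x₀ + 1 := by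
      rw [hT]; field_simp
    have : y + 1 ≤ x T := by nlinarith [hkey, hmT]
    have := hcon T (le_of_lt hT0)
    linarith
  refine ⟨main, ?_⟩
  intro δ hδ
  set x₀ := min δ E / 2 with hx₀def
  have hx₀pos : 0 < x₀ := by
    have : 0 < min δ E := lt_min hδ hE
    positivity
  have hx₀δ : x₀ < δ := by
    have h1 : min δ E ≤ δ := min_le_left _ _
    have : 0 < min δ E := lt_min hδ hE
    rw [hx₀def]; linarith
  have hx₀E : x₀ < E := by
    have h1 : min δ E ≤ E := min_le_right _ _
    have : 0 < min δ E := lt_min hδ hE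
    rw [hx₀def]; linarith
  refine ⟨x₀, ⟨hx₀pos, hx₀δ⟩, ?_⟩
  intro x hx0 hx
  obtain ⟨t, ht0, hty⟩ := main x₀ ⟨hx₀pos, hx₀E⟩ (E / 2) ⟨by linarith, by linarith⟩ x hx0 hx
  exact ⟨t, ht0, fun hmem => absurd hmem.2 (not_lt.mpr (le_of_lt hty))⟩
end

section
/- Under the bistable Solow–Swan hypotheses, trajectories starting to the left of the unstable equilibrium E₁ reach the origin: if x is a solution with initial condition x₀ ∈ (0, E₁), then x(t) → 0 as t → ∞. -/
/-!
Write `f z = F z - C z`, a locally Lipschitz vector field vanishing at `0` and `E₁` and negative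
in between. By uniqueness of solutions (run backwards in time) a trajectory that is not at an
equilibrium at time `0` never reaches one, so by the intermediate value theorem it stays in
`(0, E₁)`. There it decreases; if it stayed above some `ε > 0` it would live in `[ε, x₀]`, where
`f ≤ -δ < 0` by compactness, and would decrease at least linearly, which is absurd.
-/

open Set Filter Topology

section Autonomous

variable {x : ℝ → ℝ}

lemma image_sub_le_mul_sub_of_hasDerivAt_le {x' : ℝ → ℝ} {B : ℝ}
    (hx : ∀ t, 0 ≤ t → HasDerivAt x (x' t) t) (hB : ∀ t, 0 < t → x' t ≤ B)
    {s t : ℝ} (hs : 0 ≤ s) (hst : s ≤ t) : x t - x s ≤ B * (t - s) := by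
  refine (convex_Ici 0).image_sub_le_mul_sub_of_deriv_le
    (fun t ht => (hx t ht).continuousAt.continuousWithinAt)
    (fun t ht => (hx t (interior_subset ht)).differentiableAt.differentiableWithinAt)
    (fun t ht => ?_) s hs t (hs.trans hst) hst
  rw [interior_Ici] at ht
  exact (hx t (le_of_lt ht)).deriv ▸ hB t ht

lemma exists_lt_of_hasDerivAt_le_neg {x' : ℝ → ℝ} {B : ℝ}
    (hx : ∀ t, 0 ≤ t → HasDerivAt x (x' t) t) (hB : B < 0) (hle : ∀ t, 0 < t → x' t ≤ B)
    (m : ℝ) : ∃ t, 0 ≤ t ∧ x t < m := by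
  obtain ⟨M, hM0, hM⟩ : ∃ M, 0 ≤ M ∧ x 0 - m ≤ M * -B :=
    ⟨_, le_max_left 0 _, (div_le_iff₀ (neg_pos.2 hB)).1 (le_max_right 0 ((x 0 - m) / -B))⟩
  refine ⟨M + 1, by positivity, ?_⟩
  linarith [image_sub_le_mul_sub_of_hasDerivAt_le hx hle le_rfl (by positivity : (0 : ℝ) ≤ M + 1)]

variable {f : ℝ → ℝ} (hode : ∀ t, 0 ≤ t → HasDerivAt x (f (x t)) t)
include hode

lemma apply_ne_of_hasDerivAt_of_apply_eq_zero (hf : LocallyLipschitz f) {c : ℝ} (hc : f c = 0)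
    (hx0 : x 0 ≠ c) {t : ℝ} (ht : 0 ≤ t) : x t ≠ c := by
  intro hxt
  -- Backward uniqueness from time `t` makes `x` constant on `[0, t]`.
  have hcont : ContinuousOn x (Icc 0 t) :=
    fun s hs => (hode s hs.1).continuousAt.continuousWithinAt
  obtain ⟨K, hK⟩ := LocallyLipschitzOn.exists_lipschitzOnWith_of_compact
    (isCompact_Icc.image_of_continuousOn hcont) hf.locallyLipschitzOn
  have hconst : EqOn x (fun _ => c) (Icc 0 t) :=
    ODE_solution_unique_of_mem_Icc_left (v := fun _ => f) (fun _ _ => hK) hcont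
      (fun s hs => (hode s hs.1.le).hasDerivWithinAt) (fun s hs => ⟨s, Ioc_subset_Icc_self hs, rfl⟩)
      continuousOn_const (fun s _ => hc ▸ hasDerivWithinAt_const s _ c)
      (fun _ _ => ⟨t, right_mem_Icc.2 ht, hxt⟩) hxt
  exact hx0 (hconst (left_mem_Icc.2 ht))

lemma mem_Ioo_of_hasDerivAt (hf : LocallyLipschitz f) {a b : ℝ} (ha : f a = 0) (hb : f b = 0)
    (hx0 : x 0 ∈ Ioo a b) {t : ℝ} (ht : 0 ≤ t) : x t ∈ Ioo a b := by
  have hcont : ContinuousOn x (Icc 0 t) :=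
    fun s hs => (hode s hs.1).continuousAt.continuousWithinAt
  by_contra hxt
  rcases not_and_or.1 hxt with hle | hge
  · obtain ⟨s, hs, hxs⟩ := intermediate_value_Icc' ht hcont ⟨not_lt.1 hle, hx0.1.le⟩
    exact apply_ne_of_hasDerivAt_of_apply_eq_zero hode hf ha hx0.1.ne' hs.1 hxs
  · obtain ⟨s, hs, hxs⟩ := intermediate_value_Icc ht hcont ⟨hx0.2.le, not_lt.1 hge⟩
    exact apply_ne_of_hasDerivAt_of_apply_eq_zero hode hf hb hx0.2.ne hs.1 hxs

lemma tendsto_zero_of_hasDerivAt (hf : Continuous f) {b : ℝ} (hneg : ∀ z ∈ Ioo 0 b, f z < 0)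
    (hx : ∀ t, 0 ≤ t → x t ∈ Ioo 0 b) : Tendsto x atTop (𝓝 0) := by
  have hanti : ∀ s t, 0 ≤ s → s ≤ t → x t ≤ x s := fun s t hs hst => by
    linarith [image_sub_le_mul_sub_of_hasDerivAt_le hode (B := 0)
      (fun t ht => (hneg _ (hx t ht.le)).le) hs hst]
  have hsmall : ∀ ε > 0, ∃ T, 0 ≤ T ∧ x T < ε := by
    intro ε hε
    by_contra! hbig
    have hmem : ∀ t, 0 ≤ t → x t ∈ Icc ε (x 0) := fun t ht => ⟨hbig t ht, hanti 0 t le_rfl ht⟩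
    obtain ⟨z, hz, hzmax⟩ :=
      isCompact_Icc.exists_isMaxOn ⟨_, hmem 0 le_rfl⟩ hf.continuousOn
    have hfz : f z < 0 := hneg z ⟨hε.trans_le hz.1, hz.2.trans_lt (hx 0 le_rfl).2⟩
    obtain ⟨t, ht, hxt⟩ := exists_lt_of_hasDerivAt_le_neg hode hfz
      (fun t ht => hzmax (hmem t ht.le)) ε
    exact (hbig t ht).not_gt hxt
  refine tendsto_order.2 ⟨fun a ha => ?_, fun ε hε => ?_⟩
  · filter_upwards [eventually_ge_atTop 0] with t ht
    exact ha.trans (hx t ht).1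
  · obtain ⟨T, hT, hxT⟩ := hsmall ε hε
    filter_upwards [eventually_ge_atTop T] with t ht
    exact (hanti T t hT ht).trans_lt hxT

end Autonomous

theorem solow_swan_bistable_left_to_origin_general
    (F : ℝ → ℝ) (C E₁ : ℝ)
    (hF : LocallyLipschitz F) (hF0 : F 0 = 0)
    (hE₁eq : F E₁ = C * E₁)
    (hlt₁ : ∀ z ∈ Set.Ioo (0 : ℝ) E₁, F z < C * z)
    (x : ℝ → ℝ) (x₀ : ℝ) (hx₀ : x₀ ∈ Set.Ioo (0 : ℝ) E₁) (hinit : x 0 = x₀)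
    (hode : ∀ t : ℝ, 0 ≤ t → HasDerivAt x (F (x t) - C * x t) t) :
    Filter.Tendsto x Filter.atTop (nhds 0) := by
  have hf : LocallyLipschitz fun z => F z - C * z := hF.sub (lipschitzWith_smul C).locallyLipschitz
  have hinv : ∀ t, 0 ≤ t → x t ∈ Ioo 0 E₁ := fun t =>
    mem_Ioo_of_hasDerivAt (f := fun z => F z - C * z) hode hf (by simp [hF0]) (by simp [hE₁eq])
      (hinit ▸ hx₀)
  exact tendsto_zero_of_hasDerivAt (f := fun z => F z - C * z) hode hf.continuous
    (fun z hz => sub_neg.2 (hlt₁ z hz)) hinv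

/-- Under the bistable Solow–Swan hypotheses, trajectories starting to the left
of the unstable equilibrium `E₁` reach the origin. -/
theorem solow_swan_bistable_left_to_origin
    (F : ℝ → ℝ) (C E₁ E : ℝ) (hC : 0 < C)
    (hF : LocallyLipschitz F) (hF0 : F 0 = 0)
    (hE₁ : 0 < E₁) (hE₁E : E₁ < E)
    (hE₁eq : F E₁ = C * E₁) (hEeq : F E = C * E)
    (hlt₁ : ∀ z ∈ Set.Ioo (0 : ℝ) E₁, F z < C * z)
    (hgt : ∀ z ∈ Set.Ioo E₁ E, C * z < F z)
    (hlt : ∀ z : ℝ, E < z → F z < C * z)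
    (x : ℝ → ℝ) (x₀ : ℝ) (hx₀ : x₀ ∈ Set.Ioo (0 : ℝ) E₁) (hinit : x 0 = x₀)
    (hode : ∀ t : ℝ, 0 ≤ t → HasDerivAt x (F (x t) - C * x t) t) :
    Filter.Tendsto x Filter.atTop (nhds 0) :=
  solow_swan_bistable_left_to_origin_general F C E₁ hF hF0 hE₁eq hlt₁ x x₀ hx₀ hinit hode
end

section
/- Equilibria of the electro-mechanical system and fold bifurcation: let a > 0 and k_m > 0, and for k > 0 let S_k = { x ∈ (0,a) : k·x·(a − x)² = k_m } (the set of equilibrium positions of the wagon). Then: (i) if k < 27·k_m/(4·a³), S_k is empty; (ii) if k = 27·k_m/(4·a³), S_k = {a/3}; (iii) if k > 27·k_m/(4·a³), S_k consists of exactly two points x₋ and x₊ with x₋ ∈ (0, a/3) and x₊ ∈ (a/3, a). -/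
private lemma em_mono (a k : ℝ) (ha : 0 < a) (hk : 0 < k) :
    StrictMonoOn (fun x : ℝ => k * x * (a - x) ^ 2) (Set.Icc 0 (a / 3)) := by
  intro x hx y hy hxy
  simp only
  have hQ : 0 < x^2 + x*y + y^2 - 2*a*(x+y) + a^2 := by
    nlinarith [mul_pos ha (show (0:ℝ) < a/3 - x by linarith [hy.2]),
      mul_nonneg ha.le (show (0:ℝ) ≤ a/3 - y by linarith [hy.2]),
      sq_nonneg (a/3 - x + (a/3 - y)), sq_nonneg (a/3 - x), sq_nonneg (a/3 - y)]
  nlinarith [mul_pos (mul_pos hk (sub_pos.mpr hxy)) hQ]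

private lemma em_anti (a k : ℝ) (ha : 0 < a) (hk : 0 < k) :
    StrictAntiOn (fun x : ℝ => k * x * (a - x) ^ 2) (Set.Icc (a / 3) a) := by
  intro x hx y hy hxy
  simp only
  have hQ : x^2 + x*y + y^2 - 2*a*(x+y) + a^2 < 0 := by
    nlinarith [mul_nonneg (show (0:ℝ) ≤ x - a/3 by linarith [hx.1]) (show (0:ℝ) ≤ a - x by linarith [hx.2]),
      mul_nonneg (show (0:ℝ) ≤ y - a/3 by linarith [hy.1]) (show (0:ℝ) ≤ a - y by linarith [hy.2]),
      mul_pos (show (0:ℝ) < y - x by linarith) (show (0:ℝ) < y - x by linarith),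
      mul_nonneg (show (0:ℝ) ≤ x - a/3 by linarith [hx.1]) (show (0:ℝ) ≤ a - y by linarith [hy.2]),
      mul_nonneg (show (0:ℝ) ≤ y - a/3 by linarith [hy.1]) (show (0:ℝ) ≤ a - x by linarith [hx.2])]
  nlinarith [mul_pos (mul_pos hk (sub_pos.mpr hxy)) (neg_pos.mpr hQ)]

/-- Equilibria of the electro-mechanical system and the fold bifurcation:
depending on the spring stiffness `k` relative to the critical value
`27 k_m / (4 a³)`, the set of equilibrium positions
`S_k = { x ∈ (0, a) : k x (a - x)² = k_m }` is empty, the single point `{a/3}`,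
or exactly two points, one in `(0, a/3)` and one in `(a/3, a)`. -/
theorem electromech_equilibria_fold
    (a k_m : ℝ) (ha : 0 < a) (hkm : 0 < k_m) (k : ℝ) (hk : 0 < k) :
    (k < 27 * k_m / (4 * a ^ 3) →
      {x ∈ Set.Ioo (0 : ℝ) a | k * x * (a - x) ^ 2 = k_m} = ∅) ∧
    (k = 27 * k_m / (4 * a ^ 3) →
      {x ∈ Set.Ioo (0 : ℝ) a | k * x * (a - x) ^ 2 = k_m} = {a / 3}) ∧
    (27 * k_m / (4 * a ^ 3) < k →
      ∃ xm xp : ℝ, xm ∈ Set.Ioo (0 : ℝ) (a / 3) ∧ xp ∈ Set.Ioo (a / 3) a ∧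
        {x ∈ Set.Ioo (0 : ℝ) a | k * x * (a - x) ^ 2 = k_m} = {xm, xp}) := by
  have ha3 : (0:ℝ) < 4 * a ^ 3 := by positivity
  refine ⟨?_, ?_, ?_⟩
  · -- subcritical: empty
    intro hlt
    have hlt' : k * (4 * a ^ 3) < 27 * k_m := (lt_div_iff₀ ha3).mp hlt
    ext x
    simp only [Set.mem_setOf_eq, Set.mem_empty_iff_false, iff_false, not_and,
      Set.mem_Ioo]
    rintro ⟨hx0, hxa⟩
    have hmax : k * x * (a - x) ^ 2 < k_m := by
      have h1 : 0 ≤ k * ((x - a/3)^2 * (4*a/3 - x)) :=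
        mul_nonneg hk.le (mul_nonneg (sq_nonneg _) (by linarith))
      nlinarith
    exact ne_of_lt hmax
  · -- critical: {a/3}
    intro heq
    have hA : k * (4 * a ^ 3) = 27 * k_m := by
      field_simp at heq; linarith [heq]
    ext x
    simp only [Set.mem_setOf_eq, Set.mem_singleton_iff, Set.mem_Ioo]
    constructor
    · rintro ⟨⟨hx0, hxa⟩, hf⟩
      have h0 : k * ((x - a/3)^2 * (4*a/3 - x)) = 0 := by
        linear_combination (1/27) * hA - hf
      have hpos : 0 < 4*a/3 - x := by linarith
      have : (x - a/3)^2 = 0 := by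
        rcases mul_eq_zero.mp h0 with h | h
        · exact absurd h (ne_of_gt hk)
        · rcases mul_eq_zero.mp h with h | h
          · exact h
          · linarith
      have := pow_eq_zero_iff (n := 2) (by norm_num) |>.mp this
      linarith [sub_eq_zero.mp this]
    · rintro rfl
      refine ⟨⟨by linarith, by linarith⟩, ?_⟩
      linear_combination (1/27) * hA
  · -- supercritical: two points
    intro hgt
    have hgt' : 27 * k_m < k * (4 * a ^ 3) := (div_lt_iff₀ ha3).mp hgt
    set f : ℝ → ℝ := fun x => k * x * (a - x) ^ 2 with hf
    have hcont : Continuous f := by fun_prop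
    have hf0 : f 0 = 0 := by simp [hf]
    have hfa : f a = 0 := by simp [hf]
    have hfm : f (a/3) = k * (4 * a ^ 3) / 27 := by simp only [hf]; ring
    have hkmlt : k_m < f (a/3) := by rw [hfm]; linarith
    -- existence of xm
    obtain ⟨xm, hxm, hfxm⟩ : ∃ xm ∈ Set.Ioo (0:ℝ) (a/3), f xm = k_m := by
      have := intermediate_value_Ioo (by linarith : (0:ℝ) ≤ a/3) hcont.continuousOn
      exact this ⟨by rw [hf0]; exact hkm, hkmlt⟩
    obtain ⟨xp, hxp, hfxp⟩ : ∃ xp ∈ Set.Ioo (a/3) a, f xp = k_m := by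
      have := intermediate_value_Ioo' (by linarith : a/3 ≤ a) hcont.continuousOn
      exact this ⟨by rw [hfa]; exact hkm, hkmlt⟩
    refine ⟨xm, xp, hxm, hxp, ?_⟩
    have hmono := em_mono a k ha hk
    have hanti := em_anti a k ha hk
    have hxmI : xm ∈ Set.Icc (0:ℝ) (a/3) := ⟨hxm.1.le, hxm.2.le⟩
    have hxpI : xp ∈ Set.Icc (a/3) a := ⟨hxp.1.le, hxp.2.le⟩
    ext x
    simp only [Set.mem_setOf_eq, Set.mem_insert_iff, Set.mem_singleton_iff,
      Set.mem_Ioo]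
    constructor
    · rintro ⟨⟨hx0, hxa⟩, hfx⟩
      rcases lt_trichotomy x (a/3) with h | h | h
      · left
        exact hmono.injOn ⟨hx0.le, h.le⟩ hxmI (hfx.trans hfxm.symm)
      · exfalso; subst h; exact absurd hfx (ne_of_gt hkmlt)
      · right
        exact hanti.injOn ⟨h.le, hxa.le⟩ hxpI (hfx.trans hfxp.symm)
    · rintro (rfl | rfl)
      · exact ⟨⟨hxm.1, lt_trans hxm.2 (by linarith)⟩, hfxm⟩
      · exact ⟨⟨lt_trans (by linarith) hxp.1, hxp.2⟩, hfxp⟩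
end

section
/- Local stability of the smaller equilibrium of the electro-mechanical system: let m, c, k, k_m, a > 0 and let x_eq ∈ (0, a/3) satisfy k·x_eq·(a − x_eq)² = k_m. Then every complex eigenvalue of the Jacobian matrix A = [[0, 1], [(2·k_m/(a − x_eq)³ − k)/m, −c/m]] has strictly negative real part. -/
/-- Local stability of the smaller equilibrium of the electro-mechanical
system: every complex eigenvalue of the Jacobian matrix at an equilibrium
`x_eq ∈ (0, a/3)` has strictly negative real part. -/
theorem electromech_small_equilibrium_stable
    (m c k k_m a : ℝ) (hm : 0 < m) (hc : 0 < c) (hk : 0 < k)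
    (hkm : 0 < k_m) (ha : 0 < a)
    (x_eq : ℝ) (hx : x_eq ∈ Set.Ioo (0 : ℝ) (a / 3))
    (heq : k * x_eq * (a - x_eq) ^ 2 = k_m) :
    ∀ μ ∈ spectrum ℂ
      (!![(0 : ℂ), 1;
          (((2 * k_m / (a - x_eq) ^ 3 - k) / m : ℝ) : ℂ), (((-c / m : ℝ)) : ℂ)]),
      μ.re < 0 := by
  intro μ hμ
  obtain ⟨hx0, hx3⟩ := hx
  have hax : (0:ℝ) < a - x_eq := by linarith
  set α : ℝ := (2 * k_m / (a - x_eq) ^ 3 - k) / m with hα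
  have hαneg : α < 0 := by
    have hlt : 2 * k_m < k * (a - x_eq) ^ 3 := by nlinarith [sq_nonneg (a - x_eq)]
    have h3 : 2 * k_m / (a - x_eq) ^ 3 < k := by
      rw [div_lt_iff₀ (by positivity)]; nlinarith
    exact div_neg_of_neg_of_pos (by linarith) hm
  have hB : (0:ℝ) < c / m := div_pos hc hm
  rw [spectrum.mem_iff] at hμ
  have hdet : Matrix.det ((algebraMap ℂ (Matrix (Fin 2) (Fin 2) ℂ)) μ -
      !![(0 : ℂ), 1; ((α : ℝ) : ℂ), (((-c / m : ℝ)) : ℂ)]) = 0 := by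
    by_contra h
    exact hμ ((Matrix.isUnit_iff_isUnit_det _).mpr (isUnit_iff_ne_zero.mpr h))
  simp [Matrix.det_fin_two, Matrix.algebraMap_matrix_apply] at hdet
  have hdet' : μ * (μ + ((c/m : ℝ):ℂ)) - ((α : ℝ):ℂ) = 0 := by
    rw [← hdet]; push_cast; ring
  have h1 := congrArg Complex.re hdet'
  have h2 := congrArg Complex.im hdet'
  simp [Complex.mul_re, Complex.mul_im] at h1 h2
  rcases eq_or_ne μ.im 0 with hy | hy
  · rw [hy] at h1
    nlinarith [h1, hαneg, hB]
  · have h2' : μ.im * (2 * μ.re + c / m) = 0 := by linarith [h2]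
    have := (mul_eq_zero.mp h2').resolve_left hy
    linarith
end

section
/- Instability of the larger equilibrium of the electro-mechanical system: let m, c, k, k_m, a > 0 and let x_eq ∈ (a/3, a) satisfy k·x_eq·(a − x_eq)² = k_m. Then the Jacobian matrix A = [[0, 1], [(2·k_m/(a − x_eq)³ − k)/m, −c/m]] has a real eigenvalue λ > 0. -/
/-- Instability of the larger equilibrium of the electro-mechanical system: the
Jacobian matrix at an equilibrium `x_eq ∈ (a/3, a)` has a positive real
eigenvalue. -/
theorem electromech_large_equilibrium_unstable
    (m c k k_m a : ℝ) (hm : 0 < m) (hc : 0 < c) (hk : 0 < k)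
    (hkm : 0 < k_m) (ha : 0 < a)
    (x_eq : ℝ) (hx : x_eq ∈ Set.Ioo (a / 3) a)
    (heq : k * x_eq * (a - x_eq) ^ 2 = k_m) :
    ∃ lam : ℝ, 0 < lam ∧
      lam ∈ spectrum ℝ
        (!![(0 : ℝ), 1;
            (2 * k_m / (a - x_eq) ^ 3 - k) / m, -c / m]) := by
  obtain ⟨hx1, hx2⟩ := hx
  have hax : 0 < a - x_eq := by linarith
  set b : ℝ := (2 * k_m / (a - x_eq) ^ 3 - k) / m with hb
  have hb' : 2 * k_m / (a - x_eq) ^ 3 - k = k * (3 * x_eq - a) / (a - x_eq) := by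
    rw [← heq]
    field_simp
    ring
  have hbpos : 0 < b := by
    rw [hb, hb']
    apply div_pos _ hm
    apply div_pos _ hax
    have : 0 < 3 * x_eq - a := by linarith
    positivity
  set p : ℝ := c / m with hp
  have hppos : 0 < p := div_pos hc hm
  set s : ℝ := Real.sqrt (p ^ 2 + 4 * b) with hs
  have hs2 : s ^ 2 = p ^ 2 + 4 * b := Real.sq_sqrt (by positivity)
  have hsp : p < s := by
    nlinarith [Real.sqrt_nonneg (p ^ 2 + 4 * b)]
  refine ⟨(-p + s) / 2, by linarith, ?_⟩
  rw [spectrum.mem_iff]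
  intro hunit
  rw [Matrix.isUnit_iff_isUnit_det] at hunit
  have hdet : ((algebraMap ℝ (Matrix (Fin 2) (Fin 2) ℝ)) ((-p + s) / 2) -
      !![(0 : ℝ), 1; b, -c / m]).det = 0 := by
    have : ((algebraMap ℝ (Matrix (Fin 2) (Fin 2) ℝ)) ((-p + s) / 2) -
        !![(0 : ℝ), 1; b, -c / m]) =
        !![(-p + s) / 2, -1; -b, (-p + s) / 2 + p] := by
      ext i j
      fin_cases i <;> fin_cases j <;>
        simp [Matrix.algebraMap_eq_diagonal, Matrix.diagonal] <;> ring
    rw [this, Matrix.det_fin_two_of]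
    nlinarith
  rw [hdet] at hunit
  exact hunit.ne_zero rfl
end
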